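/- Let m ≥ 2 and n = 2m + 1, and let w : ZMod (2m+2) → ℝ → ℝ be a family of functions such that (radial tt*-Toda equation) for every j ∈ ZMod (2m+2) and every r > 0: deriv (deriv (w j)) r + (deriv (w j) r)/r = 4·(exp (w j r − w (j−1) r) − exp (w (j+1) r − w j r)), and (anti-symmetry with l = 1) w j + w (−j) = 0 for all j ∈ ZMod (2m+2). Then w 0 = 0 and w (m+1) = 0 identically, and the functions v_i := w (i+1) for i ∈ Fin m satisfy, for every r > 0: deriv (deriv v_0) r + (deriv v_0 r)/r = 4·(exp (v_0 r) − exp (v_1 r − v_0 r)); for every i with 1 ≤ i ≤ m − 2: deriv (deriv v_i) r + (deriv v_i r)/r = 4·(exp (v_i r − v_{i−1} r) − exp (v_{i+1} r − v_i r)); and deriv (deriv v_{m−1}) r + (deriv v_{m−1} r)/r = 4·(exp (v_{m−1} r − v_{m−2} r) − exp (−v_{m−1} r)). -/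
import Mathlib


/-- Case `(n, l) = (2m + 1, 1)` of Corollary 4.2: a radial solution of the tt*-Toda
equation with `n = 2m + 1` and anti-symmetry condition `l = 1` satisfies `w 0 = 0` and
`w (m+1) = 0`, and reduces to a system of `m` unknown functions `v_i = w (i+1)` with
`a = b = 1`. -/
theorem radial_toda_reduction_odd_n_l_one
    (m : ℕ) (hm : 2 ≤ m) (w : ZMod (2 * m + 2) → ℝ → ℝ)
    (htoda : ∀ j : ZMod (2 * m + 2), ∀ r : ℝ, 0 < r →
      deriv (deriv (w j)) r + deriv (w j) r / r
        = 4 * (Real.exp (w j r - w (j - 1) r) - Real.exp (w (j + 1) r - w j r)))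
    (hanti : ∀ j : ZMod (2 * m + 2), w j + w (-j) = 0)
    (v : Fin m → ℝ → ℝ)
    (hv : ∀ i : Fin m, v i = w ((((i : ℕ) + 1 : ℕ) : ZMod (2 * m + 2)))) :
    w 0 = 0 ∧
    w (((m + 1 : ℕ) : ZMod (2 * m + 2))) = 0 ∧
    (∀ r : ℝ, 0 < r →
      deriv (deriv (v ⟨0, by omega⟩)) r + deriv (v ⟨0, by omega⟩) r / r
        = 4 * (Real.exp (v ⟨0, by omega⟩ r)
            - Real.exp (v ⟨1, by omega⟩ r - v ⟨0, by omega⟩ r))) ∧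
    (∀ i : ℕ, (_ : 1 ≤ i) → (_ : i ≤ m - 2) → ∀ r : ℝ, 0 < r →
      deriv (deriv (v ⟨i, by omega⟩)) r + deriv (v ⟨i, by omega⟩) r / r
        = 4 * (Real.exp (v ⟨i, by omega⟩ r - v ⟨i - 1, by omega⟩ r)
            - Real.exp (v ⟨i + 1, by omega⟩ r - v ⟨i, by omega⟩ r))) ∧
    (∀ r : ℝ, 0 < r →
      deriv (deriv (v ⟨m - 1, by omega⟩)) r + deriv (v ⟨m - 1, by omega⟩) r / r
        = 4 * (Real.exp (v ⟨m - 1, by omega⟩ r - v ⟨m - 2, by omega⟩ r)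
            - Real.exp (-(v ⟨m - 1, by omega⟩ r)))) := by

  have hw0 : w 0 = 0 := by
    have h := hanti 0
    rw [neg_zero] at h
    funext r
    have hr := congrFun h r
    simp only [Pi.add_apply, Pi.zero_apply] at hr ⊢
    linarith
  have hcast : (((m + 1 : ℕ)) : ZMod (2 * m + 2)) = -(((m + 1 : ℕ)) : ZMod (2 * m + 2)) := by
    rw [eq_neg_iff_add_eq_zero, ← Nat.cast_add]
    have h2 : (m + 1) + (m + 1) = 2 * m + 2 := by omega
    rw [h2, ZMod.natCast_self]
  have hwm1 : w (((m + 1 : ℕ)) : ZMod (2 * m + 2)) = 0 := by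
    have h := hanti (((m + 1 : ℕ)) : ZMod (2 * m + 2))
    rw [← hcast] at h
    funext r
    have hr := congrFun h r
    simp only [Pi.add_apply, Pi.zero_apply] at hr ⊢
    linarith
  refine ⟨hw0, hwm1, ?_, ?_, ?_⟩
  · intro r hr
    have h := htoda (((1 : ℕ)) : ZMod (2 * m + 2)) r hr
    rw [hv ⟨0, by omega⟩, hv ⟨1, by omega⟩]
    have e1 : (((0 : ℕ) + 1 : ℕ) : ZMod (2 * m + 2)) = ((1 : ℕ) : ZMod (2 * m + 2)) := by
      norm_num
    have e2 : (((1 : ℕ) + 1 : ℕ) : ZMod (2 * m + 2)) = ((1 : ℕ) : ZMod (2 * m + 2)) + 1 := by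
      push_cast; ring
    have e3 : ((1 : ℕ) : ZMod (2 * m + 2)) - 1 = 0 := by push_cast; ring
    rw [e1, e2]
    rw [e3] at h
    rw [h, congrFun hw0 r]
    simp only [Pi.zero_apply]
    ring_nf
  · intro i hi1 hi2 r hr
    have h := htoda (((i + 1 : ℕ)) : ZMod (2 * m + 2)) r hr
    rw [hv ⟨i, by omega⟩, hv ⟨i - 1, by omega⟩, hv ⟨i + 1, by omega⟩]
    have e1 : (((i - 1 : ℕ) + 1 : ℕ) : ZMod (2 * m + 2)) = ((i + 1 : ℕ) : ZMod (2 * m + 2)) - 1 := by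
      have : (i - 1) + 1 = i := by omega
      rw [this]; push_cast; ring
    have e2 : (((i + 1 : ℕ) + 1 : ℕ) : ZMod (2 * m + 2)) = ((i + 1 : ℕ) : ZMod (2 * m + 2)) + 1 := by
      push_cast; ring
    rw [e1, e2]
    exact h
  · intro r hr
    have h := htoda (((m : ℕ)) : ZMod (2 * m + 2)) r hr
    rw [hv ⟨m - 1, by omega⟩, hv ⟨m - 2, by omega⟩]
    have e1 : (((m - 1 : ℕ) + 1 : ℕ) : ZMod (2 * m + 2)) = ((m : ℕ) : ZMod (2 * m + 2)) := by
      congr 1; omega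
    have e2 : (((m - 2 : ℕ) + 1 : ℕ) : ZMod (2 * m + 2)) = ((m : ℕ) : ZMod (2 * m + 2)) - 1 := by
      have h3 : (m - 2) + 1 = m - 1 := by omega
      rw [h3]
      rw [Nat.cast_sub (by omega : 1 ≤ m), Nat.cast_one]
    have e3 : ((m : ℕ) : ZMod (2 * m + 2)) + 1 = (((m + 1 : ℕ)) : ZMod (2 * m + 2)) := by
      push_cast; ring
    rw [e1, e2, h]
    rw [e3, congrFun hwm1 r]
    simp only [Pi.zero_apply]
    ring_nf
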